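/- arXiv:2512.11201 — 3 statements merged into one kernel-verified Lean document; each statement's English description precedes it below -/
import Mathlib

section
/- Let K ≥ 2 and weights w : Fin K → ℝ with w i > 0 for all i, total W = ∑ i, w i, probabilities p i = w i / W, learning rate η ≥ 0, a chosen arm a, loss ℓ ∈ [0,1], and updated weights w' defined by w' a = w a · exp(-η · ℓ / p a) and w' i = w i for i ≠ a. Then the new total W' = ∑ i, w' i satisfies W' ≥ W · (1 - η). -/
theorem exp3_total_weight_lower_bound
    (K : ℕ) (hK : 2 ≤ K) (w : Fin K → ℝ) (hw : ∀ i, 0 < w i)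
    (W : ℝ) (hW : W = ∑ i, w i)
    (p : Fin K → ℝ) (hp : ∀ i, p i = w i / W)
    (η : ℝ) (hη : 0 ≤ η) (a : Fin K) (ℓ : ℝ) (hℓ0 : 0 ≤ ℓ) (hℓ1 : ℓ ≤ 1)
    (w' : Fin K → ℝ)
    (hwa : w' a = w a * Real.exp (-η * ℓ / p a))
    (hwi : ∀ i, i ≠ a → w' i = w i)
    (W' : ℝ) (hW' : W' = ∑ i, w' i) :
    W' ≥ W * (1 - η) := by
  have hKpos : 0 < K := by omega
  have : Nonempty (Fin K) := ⟨⟨0, hKpos⟩⟩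
  have hWpos : 0 < W := by
    rw [hW]; exact Finset.sum_pos (fun i _ => hw i) Finset.univ_nonempty
  have hwa_pos := hw a
  have hpa : p a = w a / W := hp a
  have hpa_pos : 0 < p a := by rw [hpa]; positivity
  -- key: exp(x) ≥ 1 + x
  have hx : -η * ℓ / p a = -(η * ℓ * W / w a) := by
    rw [hpa]; field_simp
  have hexp : Real.exp (-η * ℓ / p a) ≥ 1 + (-η * ℓ / p a) := by
    have := Real.add_one_le_exp (-η * ℓ / p a); linarith
  have hw'a : w' a ≥ w a - η * ℓ * W := by
    rw [hwa]
    have := mul_le_mul_of_nonneg_left hexp (le_of_lt hwa_pos)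
    calc w a - η * ℓ * W = w a * (1 + (-η * ℓ / p a)) := by
          rw [hx]; field_simp; ring
      _ ≤ w a * Real.exp (-η * ℓ / p a) := this
  -- W' - W = w' a - w a
  have hdiff : W' - W = w' a - w a := by
    rw [hW', hW, ← Finset.sum_sub_distrib]
    rw [Finset.sum_eq_single a]
    · intro i _ hi; rw [hwi i hi]; ring
    · intro h; exact absurd (Finset.mem_univ a) h
  have hηℓ : η * ℓ ≤ η := by nlinarith
  nlinarith [hw'a, hdiff, hWpos]
end

section
/- Let K ≥ 1, weights w : Fin K → ℝ with w i ≥ 0, and W̄ = (∑ i, w i)/K. Suppose bins b_1, ..., b_K each of total mass W̄ partition the total mass so that each bin contains portions of at most two indices and the total mass assigned to index i across all bins equals w i. Then sampling a bin uniformly at random and then an index within the bin proportionally to its portion yields index i with probability w i / (∑ j, w j). -/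
open Classical in
theorem alias_method_correct
    (K : ℕ) (hK : 1 ≤ K) (w : Fin K → ℝ) (hw : ∀ i, 0 ≤ w i)
    (hpos : 0 < ∑ i, w i)
    (Wbar : ℝ) (hWbar : Wbar = (∑ i, w i) / K)
    (mass : Fin K → Fin K → ℝ)   -- mass b i : portion of index i in bin b
    (hmass : ∀ b i, 0 ≤ mass b i)
    (hbin : ∀ b, ∑ i, mass b i = Wbar)
    (htwo : ∀ b, (Finset.univ.filter fun i => mass b i ≠ 0).card ≤ 2)
    (htotal : ∀ i, ∑ b, mass b i = w i) :
    ∀ i, ∑ b, (1 / K : ℝ) * (mass b i / Wbar) = w i / ∑ j, w j := by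
  intro i
  have hK0 : (0:ℝ) < K := by exact_mod_cast Nat.lt_of_lt_of_le Nat.zero_lt_one hK
  have hS : (0:ℝ) < ∑ j, w j := hpos
  have hW0 : Wbar ≠ 0 := by
    rw [hWbar]; positivity
  have hKW : (K:ℝ) * Wbar = ∑ j, w j := by
    rw [hWbar]; field_simp
  calc ∑ b, (1 / K : ℝ) * (mass b i / Wbar)
      = (∑ b, mass b i) / ((K:ℝ) * Wbar) := by
        rw [Finset.sum_div]
        exact Finset.sum_congr rfl fun b _ => by field_simp
    _ = w i / ∑ j, w j := by rw [htotal, hKW]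
end

section
/- Suppose at round t the total expert weight satisfies W̃_{t+1} ≥ W̃_t·(1 - η·ℓ) for some loss ℓ ∈ [0,1] and η ∈ [0, 1/2]. Formally: let N ≥ 1, weights w̃ : Fin N → ℝ positive with total W̃ = ∑ j, w̃ j, probabilities p̃ j = w̃ j / W̃, a set E ⊆ Fin N, ℓ ∈ [0,1], η ≥ 0, and updated weights w̃' j = w̃ j · exp(-η·ℓ/(∑_{j' ∈ E} p̃ j')) for j ∈ E and w̃' j = w̃ j otherwise, with ∑_{j' ∈ E} p̃ j' > 0. Then ∑ j, w̃' j ≥ W̃·(1 - η·ℓ). -/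
theorem exp4_total_weight_lower_bound
    (N : ℕ) (hN : 1 ≤ N) (w : Fin N → ℝ) (hw : ∀ j, 0 < w j)
    (W : ℝ) (hW : W = ∑ j, w j)
    (p : Fin N → ℝ) (hp : ∀ j, p j = w j / W)
    (E : Finset (Fin N)) (hE : 0 < ∑ j ∈ E, p j)
    (ℓ : ℝ) (hℓ0 : 0 ≤ ℓ) (hℓ1 : ℓ ≤ 1)
    (η : ℝ) (hη0 : 0 ≤ η) (hη2 : η ≤ 1/2)
    (w' : Fin N → ℝ)
    (hwE : ∀ j ∈ E, w' j = w j * Real.exp (-η * ℓ / ∑ j' ∈ E, p j'))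
    (hwO : ∀ j ∉ E, w' j = w j) :
    ∑ j, w' j ≥ W * (1 - η * ℓ) := by
  set q : ℝ := ∑ j' ∈ E, p j' with hq
  have hW0 : 0 < W := by
    rw [hW]
    exact Finset.sum_pos (fun j _ => hw j) (Finset.univ_nonempty_iff.mpr
      ⟨⟨0, hN⟩⟩)
  -- sum of w over E equals q * W
  have hEsum : ∑ j ∈ E, w j = q * W := by
    rw [hq]
    rw [Finset.sum_mul]
    refine Finset.sum_congr rfl fun j _ => ?_
    rw [hp j]
    field_simp
  have hsplit : ∑ j, w' j = (∑ j ∈ E, w' j) + ∑ j ∈ Eᶜ, w' j := by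
    rw [Finset.sum_add_sum_compl]
  have hc : ∑ j ∈ Eᶜ, w' j = ∑ j ∈ Eᶜ, w j :=
    Finset.sum_congr rfl fun j hj => hwO j (Finset.mem_compl.mp hj)
  have hWsplit : W = (∑ j ∈ E, w j) + ∑ j ∈ Eᶜ, w j := by
    rw [hW, ← Finset.sum_add_sum_compl E w]
  have hexp : Real.exp (-η * ℓ / q) ≥ 1 - η * ℓ / q := by
    have h1 := Real.add_one_le_exp (-η * ℓ / q)
    have h2 : -η * ℓ / q = -(η * ℓ / q) := by ring
    linarith
  have hEsum' : ∑ j ∈ E, w' j ≥ (∑ j ∈ E, w j) * (1 - η * ℓ / q) := by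
    rw [Finset.sum_mul]
    refine Finset.sum_le_sum fun j hj => ?_
    rw [hwE j hj]
    exact mul_le_mul_of_nonneg_left hexp (hw j).le
  have key : (∑ j ∈ E, w j) * (1 - η * ℓ / q) + ∑ j ∈ Eᶜ, w j
      = W * (1 - η * ℓ) := by
    rw [hEsum]
    field_simp
    nlinarith [hWsplit, hEsum]
  rw [hsplit, hc]
  linarith [hEsum']
end
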